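/- In the regularized team model, assume the matrix P defined by P(j,i) = λ_i(r)/(2ρ_j) for i ≠ j and P(j,j) = 0 has spectral radius less than 1. Then the best response operator B(γ) = (B₁(γ^{-1}),…,B_N(γ^{-N})) has a unique fixed point γ* in ∏Γ_i, and the iterates γ^{k+1} = B(γ^k) from any initial profile converge to γ* in the L¹ policy norm. -/

import Mathlib

/-!
Each best response `B_j γ y` maximizes `⟨G_j γ y, ·⟩ - Ω_j` over the simplex, and `ρ_j`-strong
convexity of `Ω_j` (in `ℓ¹`) turns a sup-norm perturbation `c` of the payoff vector into an
`ℓ¹` perturbation of at most `c / ρ_j` of the maximizer. The payoff `G_j γ` is multilinear in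
the other players' joint laws of `(y_i, u_i)`; exchanging these laws one player at a time, each
exchange moves it by at most `λ_i / 2 · ‖γ_i - ξ_i‖`, since the exchanged weights sum to zero
over `u_i` while `r` oscillates by at most `λ_i` in `u_i`. Hence the vector `d(γ, ξ)` of `L¹`
policy distances satisfies `d(Bγ, Bξ) ≤ P d(γ, ξ)` and so `d(Bᵏγ, Bᵏξ) ≤ Pᵏ d(γ, ξ)`. By
Gelfand's formula the entries of `Pᵏ` are summable, so the iterates are Cauchy in the closed
set of policy profiles; their limit is a fixed point attracting every orbit, hence the only one.
-/

open Finset Filter Function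
open scoped Matrix

theorem abs_sum_mul_le_of_sum_eq_zero {V : Type*} [Fintype V] [Nonempty V] {f d : V → ℝ}
    {c : ℝ} (hf : ∀ v w, f v - f w ≤ c) (hd : ∑ v, d v = 0) :
    |∑ v, f v * d v| ≤ c / 2 * ∑ v, |d v| := by
  obtain ⟨vmax, -, hmax⟩ := exists_max_image univ f univ_nonempty
  obtain ⟨vmin, -, hmin⟩ := exists_min_image univ f univ_nonempty
  set μ := (f vmax + f vmin) / 2 with hμ
  have hcenter : ∀ v, |f v - μ| ≤ c / 2 := fun v => by
    rw [abs_le]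
    constructor <;> linarith [hmax v (mem_univ v), hmin v (mem_univ v), hf vmax vmin]
  have hshift : ∑ v, f v * d v = ∑ v, (f v - μ) * d v := by
    simp only [sub_mul, sum_sub_distrib, ← mul_sum, hd, mul_zero, sub_zero]
  calc |∑ v, f v * d v| = |∑ v, (f v - μ) * d v| := by rw [hshift]
    _ ≤ ∑ v, |f v - μ| * |d v| := (abs_sum_le_sum_abs _ _).trans_eq (by simp only [abs_mul])
    _ ≤ ∑ v, c / 2 * |d v| := by gcongr with v; exact hcenter v
    _ = c / 2 * ∑ v, |d v| := by rw [mul_sum]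

theorem abs_sum_mul_le_of_fiberwise_sum_eq_zero {A V : Type*} [Fintype A] [Fintype V]
    [Nonempty V] {f d : A × V → ℝ} {c : ℝ} (hf : ∀ a v w, f (a, v) - f (a, w) ≤ c)
    (hd : ∀ a, ∑ v, d (a, v) = 0) :
    |∑ x, f x * d x| ≤ c / 2 * ∑ x, |d x| := by
  rw [Fintype.sum_prod_type, Fintype.sum_prod_type, mul_sum]
  exact (abs_sum_le_sum_abs _ _).trans
    (sum_le_sum fun a _ => abs_sum_mul_le_of_sum_eq_zero (hf a) (hd a))

section StrongConvexity

variable {V : Type*} [Fintype V]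

def IsStrongConvexOnStdSimplex (ρ : ℝ) (Ω : (V → ℝ) → ℝ) : Prop :=
  ∀ δ ∈ stdSimplex ℝ V, ∀ ξ ∈ stdSimplex ℝ V, ∀ t : ℝ, 0 ≤ t → t ≤ 1 →
    Ω (fun v => t * δ v + (1 - t) * ξ v) ≤
      t * Ω δ + (1 - t) * Ω ξ - ρ * (t * (1 - t) / 2) * (∑ v, |δ v - ξ v|) ^ 2

variable {ρ : ℝ} {Ω : (V → ℝ) → ℝ}

theorem sq_l1_le_sub_of_isMaxOn (hΩ : IsStrongConvexOnStdSimplex ρ Ω) {g α β : V → ℝ}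
    (hα : α ∈ stdSimplex ℝ V) (hβ : β ∈ stdSimplex ℝ V)
    (hmax : IsMaxOn (fun δ => ∑ v, g v * δ v - Ω δ) (stdSimplex ℝ V) α) :
    ρ / 2 * (∑ v, |β v - α v|) ^ 2 ≤ (∑ v, g v * α v - Ω α) - (∑ v, g v * β v - Ω β) := by
  set S := ∑ v, |β v - α v|
  -- compare `α` with the mixtures `t β + (1 - t) α` and let `t → 0`
  have hmix : ∀ t : ℝ, 0 < t → t ≤ 1 →
      ρ * ((1 - t) / 2) * S ^ 2 ≤ (∑ v, g v * α v - Ω α) - (∑ v, g v * β v - Ω β) := by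
    intro t ht0 ht1
    have hmem : (fun v => t * β v + (1 - t) * α v) ∈ stdSimplex ℝ V :=
      convex_stdSimplex ℝ V hβ hα ht0.le (by linarith) (by ring)
    have hopt := isMaxOn_iff.1 hmax _ hmem
    have hconv := hΩ β hβ α hα t ht0.le ht1
    have hlin : ∑ v, g v * (t * β v + (1 - t) * α v)
        = t * ∑ v, g v * β v + (1 - t) * ∑ v, g v * α v := by
      simp only [mul_add, sum_add_distrib, mul_sum]
      congr 1 <;> exact sum_congr rfl fun v _ => by ring
    simp only [hlin] at hopt
    have : t * (ρ * ((1 - t) / 2) * S ^ 2) ≤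
        t * ((∑ v, g v * α v - Ω α) - (∑ v, g v * β v - Ω β)) := by nlinarith
    exact le_of_mul_le_mul_left this ht0
  have hlim : Tendsto (fun t : ℝ => ρ * ((1 - t) / 2) * S ^ 2) (nhdsWithin 0 (Set.Ioi 0))
      (nhds (ρ / 2 * S ^ 2)) := by
    have : Continuous (fun t : ℝ => ρ * ((1 - t) / 2) * S ^ 2) := by fun_prop
    convert (this.tendsto 0).mono_left nhdsWithin_le_nhds using 2
    ring
  refine le_of_tendsto hlim ?_
  filter_upwards [Ioc_mem_nhdsGT zero_lt_one] with t ht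
  exact hmix t ht.1 ht.2

theorem mul_l1_le_of_isMaxOn [Nonempty V] (hΩ : IsStrongConvexOnStdSimplex ρ Ω)
    {g h α β : V → ℝ} (hα : α ∈ stdSimplex ℝ V) (hβ : β ∈ stdSimplex ℝ V)
    (hgα : IsMaxOn (fun δ => ∑ v, g v * δ v - Ω δ) (stdSimplex ℝ V) α)
    (hhβ : IsMaxOn (fun δ => ∑ v, h v * δ v - Ω δ) (stdSimplex ℝ V) β)
    {c : ℝ} (hgh : ∀ v, |g v - h v| ≤ c) :
    ρ * ∑ v, |α v - β v| ≤ c := by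
  set S := ∑ v, |α v - β v|
  have hgap₁ := sq_l1_le_sub_of_isMaxOn hΩ hα hβ hgα
  have hgap₂ := sq_l1_le_sub_of_isMaxOn hΩ hβ hα hhβ
  have hsymm : ∑ v, |β v - α v| = S := sum_congr rfl fun v _ => abs_sub_comm _ _
  rw [hsymm] at hgap₁
  have hcross : ρ * S ^ 2 ≤ ∑ v, (g v - h v) * (α v - β v) := by
    simp only [sub_mul, mul_sub, sum_sub_distrib] at hgap₂ ⊢
    linarith
  have hbound : ∑ v, (g v - h v) * (α v - β v) ≤ c * S := by
    rw [mul_sum]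
    refine sum_le_sum fun v _ => ?_
    calc (g v - h v) * (α v - β v) ≤ |g v - h v| * |α v - β v| := by
          rw [← abs_mul]; exact le_abs_self _
      _ ≤ c * |α v - β v| := by gcongr; exact hgh v
  have hc : 0 ≤ c := (abs_nonneg _).trans (hgh (Classical.arbitrary V))
  rcases (show 0 ≤ S from sum_nonneg fun v _ => abs_nonneg _).eq_or_lt with hS | hS
  · rw [← hS, mul_zero]; exact hc
  · exact le_of_mul_le_mul_right (by nlinarith) hS

end StrongConvexity

section ProdWeightedSum

variable {ι : Type*} [Fintype ι] [DecidableEq ι] {Z : ι → Type*} [∀ k, Fintype (Z k)]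

def prodWeightedSum (f : (∀ k, Z k) → ℝ) (w : ∀ k, Z k → ℝ) : ℝ :=
  ∑ z, f z * ∏ k, w k (z k)

theorem prodWeightedSum_sub_update (f : (∀ k, Z k) → ℝ) (w : ∀ k, Z k → ℝ) (i : ι)
    (v : Z i → ℝ) :
    prodWeightedSum f w - prodWeightedSum f (update w i v) =
      ∑ z, f z * (w i (z i) - v (z i)) * ∏ k ∈ univ.erase i, w k (z k) := by
  rw [prodWeightedSum, prodWeightedSum, ← sum_sub_distrib]
  refine sum_congr rfl fun z _ => ?_
  have hrest : ∏ k ∈ univ.erase i, update w i v k (z k) = ∏ k ∈ univ.erase i, w k (z k) :=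
    prod_congr rfl fun k hk => by rw [update_of_ne (ne_of_mem_erase hk)]
  rw [← mul_prod_erase univ (fun k => w k (z k)) (mem_univ i),
    ← mul_prod_erase univ (fun k => update w i v k (z k)) (mem_univ i), hrest, update_self]
  ring

theorem abs_sum_mul_prod_erase_le (f : (∀ k, Z k) → ℝ) (i : ι) [Nonempty (Z i)] (d : Z i → ℝ)
    (w : ∀ k, Z k → ℝ) (hw : ∀ k, k ≠ i → ∀ x, 0 ≤ w k x) {c : ℝ}
    (hf : ∀ z, |∑ x, f (update z i x) * d x| ≤ c) :
    |∑ z, f z * d (z i) * ∏ k ∈ univ.erase i, w k (z k)| ≤ c * ∏ k ∈ univ.erase i, ∑ x, w k x := by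
  set e := Equiv.piSplitAt i Z
  set W : (∀ k : {k // k ≠ i}, Z k) → ℝ := fun z' => ∏ k, w k.1 (z' k)
  have he : ∀ x z', e.symm (x, z') = update (e.symm (Classical.arbitrary _, z')) i x := by
    intro x z'
    funext k
    by_cases hk : k = i
    · subst hk; simp [e]
    · simp [e, hk]
  have hprod : ∀ x z', ∏ k ∈ univ.erase i, w k (e.symm (x, z') k) = W z' := by
    intro x z'
    rw [prod_subtype (univ.erase i) (p := (· ≠ i)) (by simp)]
    exact prod_congr rfl fun k _ => by simp [e, k.2]
  have hsplit : ∑ z, f z * d (z i) * ∏ k ∈ univ.erase i, w k (z k) =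
      ∑ z', W z' * ∑ x, f (update (e.symm (Classical.arbitrary _, z')) i x) * d x := by
    rw [← e.symm.sum_comp, Fintype.sum_prod_type, sum_comm]
    refine sum_congr rfl fun z' _ => ?_
    rw [mul_sum]
    refine sum_congr rfl fun x _ => ?_
    rw [hprod, ← he]
    simp [e]
    ring
  have hW : ∀ z', 0 ≤ W z' := fun z' => prod_nonneg fun k _ => hw k k.2 _
  rw [hsplit]
  calc |∑ z', W z' * ∑ x, f (update (e.symm (Classical.arbitrary _, z')) i x) * d x|
      ≤ ∑ z', W z' * c := (abs_sum_le_sum_abs _ _).trans <| sum_le_sum fun z' _ => by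
        rw [abs_mul, abs_of_nonneg (hW z')]; exact mul_le_mul_of_nonneg_left (hf _) (hW z')
    _ = c * ∏ k ∈ univ.erase i, ∑ x, w k x := by
      rw [← sum_mul, mul_comm, prod_subtype (univ.erase i) (p := (· ≠ i)) (by simp)]
      exact congrArg _ (Fintype.prod_sum fun (k : {k // k ≠ i}) x => w k x).symm

theorem abs_prodWeightedSum_sub_le [∀ k, Nonempty (Z k)] (f : (∀ k, Z k) → ℝ)
    {a b : ∀ k, Z k → ℝ} (ha : ∀ k, a k ∈ stdSimplex ℝ (Z k)) (hb : ∀ k, b k ∈ stdSimplex ℝ (Z k))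
    (c : ι → ℝ) (hf : ∀ i z, |∑ x, f (update z i x) * (a i x - b i x)| ≤ c i) :
    |prodWeightedSum f a - prodWeightedSum f b| ≤ ∑ i, c i := by
  -- swap the weights from `b` to `a` one coordinate at a time
  set hybrid : Finset ι → ∀ k, Z k → ℝ := fun s k => if k ∈ s then a k else b k
  have hmem : ∀ s k, hybrid s k ∈ stdSimplex ℝ (Z k) := fun s k => by
    simp only [hybrid]; split_ifs; exacts [ha k, hb k]
  suffices ∀ s, |prodWeightedSum f (hybrid s) - prodWeightedSum f b| ≤ ∑ i ∈ s, c i by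
    simpa [hybrid] using this univ
  intro s
  induction s using Finset.induction_on with
  | empty => simp [hybrid]
  | insert i s hi ih =>
    have hupdate : hybrid s = update (hybrid (insert i s)) i (b i) := by
      funext k
      by_cases hk : k = i
      · subst hk; simp [hybrid, hi]
      · simp [hybrid, hk]
    have hstep :
        |prodWeightedSum f (hybrid (insert i s)) - prodWeightedSum f (hybrid s)| ≤ c i := by
      rw [hupdate, prodWeightedSum_sub_update]
      have := abs_sum_mul_prod_erase_le f i (fun x => a i x - b i x) (hybrid (insert i s))
        (fun k _ x => (hmem _ k).1 x) (hf i)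
      rw [prod_eq_one fun k _ => (hmem (insert i s) k).2, mul_one] at this
      simpa [hybrid] using this
    rw [sum_insert hi]
    exact (abs_sub_le _ _ _).trans (add_le_add hstep ih)

end ProdWeightedSum

section MatrixPowers

attribute [local instance] Matrix.linftyOpSeminormedAddCommGroup Matrix.linftyOpNormedRing
  Matrix.linftyOpNormedAlgebra

variable {n : Type*} [Fintype n] [DecidableEq n]

omit [DecidableEq n] in
theorem Matrix.norm_apply_le_linfty_opNorm {m α : Type*} [Fintype m] [SeminormedAddCommGroup α]
    (A : Matrix m n α) (i : m) (j : n) : ‖A i j‖ ≤ ‖A‖ := by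
  have h : ‖A i j‖₊ ≤ ‖A‖₊ := by
    rw [Matrix.linfty_opNNNorm_def]
    exact (single_le_sum (f := fun j => ‖A i j‖₊) (fun _ _ => zero_le) (mem_univ j)).trans
      (le_sup (f := fun i => ∑ j, ‖A i j‖₊) (mem_univ i))
  exact_mod_cast h

theorem Matrix.summable_abs_pow_apply {P : Matrix n n ℝ}
    (hP : ∀ μ ∈ spectrum ℂ (P.map (Complex.ofReal ·)), ‖μ‖ < 1) (i j : n) :
    Summable fun k => |(P ^ k) i j| := by
  have : Nonempty n := ⟨i⟩
  set Pc : Matrix n n ℂ := P.map (Complex.ofReal ·)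
  have hrad : spectralRadius ℂ Pc < 1 := by
    obtain ⟨z, hz, hzr⟩ := spectrum.exists_nnnorm_eq_spectralRadius Pc
    rw [← hzr]
    exact_mod_cast hP z hz
  obtain ⟨r, hr, hr1⟩ := ENNReal.lt_iff_exists_nnreal_btwn.1 hrad
  -- Gelfand's formula
  have hev : ∀ᶠ k : ℕ in atTop, ‖Pc ^ k‖ ≤ (r : ℝ) ^ k := by
    filter_upwards
      [(spectrum.pow_nnnorm_pow_one_div_tendsto_nhds_spectralRadius Pc).eventually_lt_const hr,
        eventually_ge_atTop 1] with k hk hk1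
    have hkpos : (0 : ℝ) < k := by exact_mod_cast hk1
    rw [← ENNReal.coe_rpow_of_nonneg _ (by positivity), ENNReal.coe_lt_coe, one_div,
      NNReal.rpow_inv_lt_iff hkpos, NNReal.rpow_natCast] at hk
    exact_mod_cast hk.le
  refine Summable.of_norm_bounded_eventually_nat
    (summable_geometric_of_lt_one r.2 (by exact_mod_cast hr1)) ?_
  filter_upwards [hev] with k hk
  have hentry : Pc ^ k = (P ^ k).map (Complex.ofReal ·) :=
    (Matrix.map_pow P Complex.ofRealHom k).symm
  calc ‖|(P ^ k) i j|‖ = ‖(Pc ^ k) i j‖ := by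
        rw [hentry, Matrix.map_apply, Complex.norm_real, Real.norm_eq_abs, Real.norm_eq_abs,
          abs_abs]
    _ ≤ ‖Pc ^ k‖ := Matrix.norm_apply_le_linfty_opNorm _ i j
    _ ≤ (r : ℝ) ^ k := hk

end MatrixPowers

theorem iterate_le_pow_mulVec {X ι : Type*} [Fintype ι] [DecidableEq ι] {P : Matrix ι ι ℝ}
    (hP : ∀ i j, 0 ≤ P i j) {S : Set X} {T : X → X} (hT : Set.MapsTo T S S)
    (D : X → X → ι → ℝ) (hD : ∀ x ∈ S, ∀ y ∈ S, ∀ j, D (T x) (T y) j ≤ (P *ᵥ D x y) j)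
    {x y : X} (hx : x ∈ S) (hy : y ∈ S) (k : ℕ) (j : ι) :
    D (T^[k] x) (T^[k] y) j ≤ (P ^ k *ᵥ D x y) j := by
  induction k generalizing j with
  | zero => simp
  | succ k ih =>
    rw [iterate_succ_apply', iterate_succ_apply', pow_succ', ← Matrix.mulVec_mulVec]
    refine (hD _ (hT.iterate k hx) _ (hT.iterate k hy) j).trans ?_
    exact sum_le_sum fun i _ => mul_le_mul_of_nonneg_left (ih i) (hP j i)

theorem exists_isFixedPt_tendsto_iterate {X : Type*} [MetricSpace X] [CompleteSpace X]
    {S : Set X} (hS : IsClosed S) (hne : S.Nonempty) {T : X → X} (hT : Set.MapsTo T S S)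
    {c : ℕ → ℝ} (hc : Summable c)
    (hdist : ∀ x ∈ S, ∀ y ∈ S, ∀ k, dist (T^[k] x) (T^[k] y) ≤ c k * dist x y) :
    ∃ x ∈ S, IsFixedPt T x ∧ ∀ y ∈ S, Tendsto (fun k => T^[k] y) atTop (nhds x) := by
  obtain ⟨x₀, hx₀⟩ := hne
  have hc0 : Tendsto c atTop (nhds 0) := hc.tendsto_atTop_zero
  have hcauchy : CauchySeq fun k => T^[k] x₀ := by
    refine cauchySeq_of_dist_le_of_summable (fun k => c k * dist x₀ (T x₀)) (fun k => ?_)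
      (hc.mul_right _)
    simpa only [iterate_succ_apply] using hdist _ hx₀ _ (hT hx₀) k
  obtain ⟨x, hlim⟩ := cauchySeq_tendsto_of_complete hcauchy
  have hxS : x ∈ S := hS.mem_of_tendsto hlim (Eventually.of_forall fun k => hT.iterate k hx₀)
  have hfix : IsFixedPt T x := by
    have hsucc : Tendsto (fun k => T (T^[k] x₀)) atTop (nhds x) := by
      simpa only [iterate_succ_apply'] using (tendsto_add_atTop_iff_nat 1).2 hlim
    refine tendsto_nhds_unique ?_ hsucc
    refine tendsto_iff_dist_tendsto_zero.2 (squeeze_zero (fun _ => dist_nonneg)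
      (fun k => hdist _ (hT.iterate k hx₀) _ hxS 1) ?_)
    simpa using (tendsto_iff_dist_tendsto_zero.1 hlim).const_mul (c 1)
  refine ⟨x, hxS, hfix, fun y hy => tendsto_iff_dist_tendsto_zero.2 ?_⟩
  refine squeeze_zero (fun _ => dist_nonneg) (fun k => ?_) (by simpa using hc0.mul_const (dist y x))
  simpa only [iterate_fixed hfix] using hdist y hy x hxS k

theorem mulVec_apply_of_eq_ite_div {ι : Type*} [Fintype ι] [DecidableEq ι]
    {P : Matrix ι ι ℝ} {lam ρ : ι → ℝ} (hρ : ∀ j, 0 < ρ j)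
    (hP : ∀ j i, P j i = if i = j then 0 else lam i / (2 * ρ j)) (v : ι → ℝ) (j : ι) :
    (P *ᵥ v) j = (∑ i ∈ univ.erase j, lam i / 2 * v i) / ρ j := by
  rw [eq_div_iff (hρ j).ne', Matrix.mulVec, dotProduct, sum_mul,
    ← sum_erase univ (a := j) (by simp [hP])]
  refine sum_congr rfl fun i hi => ?_
  rw [hP, if_neg (ne_of_mem_erase hi)]
  field_simp [(hρ j).ne']

section TeamModel

variable {ι : Type*} {Y U : ι → Type*} [∀ i, Fintype (Y i)] [∀ i, Fintype (U i)]

def policyProfiles : Set (∀ i, Y i → U i → ℝ) := {γ | ∀ i y, γ i y ∈ stdSimplex ℝ (U i)}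

omit [∀ i, Fintype (Y i)] in
theorem isClosed_policyProfiles : IsClosed (policyProfiles (Y := Y) (U := U)) := by
  simp only [policyProfiles, Set.ofPred_forall]
  exact isClosed_iInter fun i => isClosed_iInter fun y =>
    (isClosed_stdSimplex ℝ (U i)).preimage ((continuous_apply y).comp (continuous_apply i))

noncomputable def policyL1Dist (α β : ∀ i, Y i → U i → ℝ) (j : ι) : ℝ :=
  ∑ y : Y j, (Fintype.card (Y j) : ℝ)⁻¹ * ∑ u, |α j y u - β j y u|

-- the law of `(y, u)` for uniform `y` and `u ∼ γ i y`
noncomputable def policyWeight (γ : ∀ i, Y i → U i → ℝ) (i : ι) (x : Y i × U i) : ℝ :=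
  γ i x.1 x.2 * (Fintype.card (Y i) : ℝ)⁻¹

theorem sum_abs_policyWeight_sub (α β : ∀ i, Y i → U i → ℝ) (i : ι) :
    ∑ x, |policyWeight α i x - policyWeight β i x| = policyL1Dist α β i := by
  simp only [policyWeight, policyL1Dist, Fintype.sum_prod_type, ← sub_mul, abs_mul,
    abs_inv, Nat.abs_cast, mul_sum, mul_comm]

theorem policyL1Dist_nonneg (α β : ∀ i, Y i → U i → ℝ) (j : ι) : 0 ≤ policyL1Dist α β j :=
  sum_nonneg fun _ _ => mul_nonneg (by positivity) (sum_nonneg fun _ _ => abs_nonneg _)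

variable [∀ i, Nonempty (Y i)]

theorem policyWeight_mem_stdSimplex {γ : ∀ i, Y i → U i → ℝ} (hγ : γ ∈ policyProfiles) (i : ι) :
    policyWeight γ i ∈ stdSimplex ℝ (Y i × U i) := by
  refine ⟨fun x => ?_, ?_⟩
  · exact mul_nonneg ((hγ i x.1).1 x.2) (by positivity)
  · simp only [policyWeight, Fintype.sum_prod_type, ← sum_mul, (hγ i _).2, sum_const, mul_one,
      card_univ, nsmul_eq_mul]
    exact mul_inv_cancel₀ (by positivity : (Fintype.card (Y i) : ℝ) ≠ 0)

theorem policyL1Dist_le_of_forall_le {α β : ∀ i, Y i → U i → ℝ} {j : ι} {K : ℝ}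
    (h : ∀ y, ∑ u, |α j y u - β j y u| ≤ K) : policyL1Dist α β j ≤ K := by
  calc policyL1Dist α β j ≤ ∑ _y : Y j, (Fintype.card (Y j) : ℝ)⁻¹ * K :=
        sum_le_sum fun y _ => by gcongr; exact h y
    _ = K := by
      rw [sum_const, card_univ, nsmul_eq_mul, ← mul_assoc, mul_inv_cancel₀ (by positivity),
        one_mul]

theorem abs_sub_le_card_mul_policyL1Dist (α β : ∀ i, Y i → U i → ℝ) (j : ι) (y : Y j) (u : U j) :
    |α j y u - β j y u| ≤ Fintype.card (Y j) * policyL1Dist α β j := by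
  have hcard : (0 : ℝ) < Fintype.card (Y j) := by positivity
  rw [← div_le_iff₀' hcard, div_eq_inv_mul]
  refine le_trans ?_ (single_le_sum (f := fun y => (Fintype.card (Y j) : ℝ)⁻¹ *
    ∑ u, |α j y u - β j y u|) (fun _ _ => by positivity) (mem_univ y))
  gcongr
  exact single_le_sum (f := fun u => |α j y u - β j y u|) (fun _ _ => abs_nonneg _) (mem_univ u)

theorem dist_le_sum_card_mul_policyL1Dist [Fintype ι] (α β : ∀ i, Y i → U i → ℝ) :
    dist α β ≤ ∑ j, Fintype.card (Y j) * policyL1Dist α β j := by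
  have hnonneg : 0 ≤ ∑ j, Fintype.card (Y j) * policyL1Dist α β j :=
    sum_nonneg fun j _ => mul_nonneg (by positivity) (policyL1Dist_nonneg α β j)
  refine (dist_pi_le_iff hnonneg).2 fun j => (dist_pi_le_iff hnonneg).2 fun y =>
    (dist_pi_le_iff hnonneg).2 fun u => ?_
  rw [Real.dist_eq]
  exact (abs_sub_le_card_mul_policyL1Dist α β j y u).trans <| single_le_sum
    (f := fun j => (Fintype.card (Y j) : ℝ) * policyL1Dist α β j)
    (fun j _ => mul_nonneg (by positivity) (policyL1Dist_nonneg α β j)) (mem_univ j)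

theorem policyL1Dist_le_card_mul_dist [Fintype ι] (α β : ∀ i, Y i → U i → ℝ) (j : ι) :
    policyL1Dist α β j ≤ Fintype.card (U j) * dist α β := by
  refine policyL1Dist_le_of_forall_le fun y => ?_
  calc ∑ u, |α j y u - β j y u| ≤ ∑ _u : U j, dist α β := sum_le_sum fun u _ => by
        rw [← Real.dist_eq]
        exact (dist_le_pi_dist (α j y) (β j y) u).trans
          ((dist_le_pi_dist (α j) (β j) y).trans (dist_le_pi_dist α β j))
    _ = Fintype.card (U j) * dist α β := by rw [sum_const, card_univ, nsmul_eq_mul]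

theorem dist_iterate_le_of_policyL1Dist_le [Fintype ι] [DecidableEq ι] {P : Matrix ι ι ℝ}
    (hP : ∀ i j, 0 ≤ P i j) {T : (∀ i, Y i → U i → ℝ) → ∀ i, Y i → U i → ℝ}
    (hT : Set.MapsTo T policyProfiles policyProfiles)
    (hstep : ∀ γ ∈ policyProfiles, ∀ ξ ∈ policyProfiles, ∀ j,
      policyL1Dist (T γ) (T ξ) j ≤ (P *ᵥ policyL1Dist γ ξ) j)
    {γ ξ : ∀ i, Y i → U i → ℝ} (hγ : γ ∈ policyProfiles) (hξ : ξ ∈ policyProfiles) (k : ℕ) :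
    dist (T^[k] γ) (T^[k] ξ) ≤
      (∑ j, ∑ i, Fintype.card (Y j) * |(P ^ k) j i| * Fintype.card (U i)) * dist γ ξ := by
  calc dist (T^[k] γ) (T^[k] ξ) ≤ ∑ j, Fintype.card (Y j) * policyL1Dist (T^[k] γ) (T^[k] ξ) j :=
        dist_le_sum_card_mul_policyL1Dist _ _
    _ ≤ ∑ j, Fintype.card (Y j) * ∑ i, |(P ^ k) j i| * (Fintype.card (U i) * dist γ ξ) := by
        gcongr with j
        refine (iterate_le_pow_mulVec hP hT policyL1Dist hstep hγ hξ k j).trans ?_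
        refine sum_le_sum fun i _ => ?_
        calc (P ^ k) j i * policyL1Dist γ ξ i ≤ |(P ^ k) j i| * policyL1Dist γ ξ i := by
              gcongr
              · exact policyL1Dist_nonneg γ ξ i
              · exact le_abs_self _
          _ ≤ |(P ^ k) j i| * (Fintype.card (U i) * dist γ ξ) := by
              gcongr
              exact policyL1Dist_le_card_mul_dist γ ξ i
    _ = (∑ j, ∑ i, Fintype.card (Y j) * |(P ^ k) j i| * Fintype.card (U i)) * dist γ ξ := by
        simp only [mul_sum, sum_mul, mul_assoc]

end TeamModel

section TeamPayoff

variable {ι : Type*} [Fintype ι] [DecidableEq ι] {Y U : ι → Type*}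
  [∀ i, Fintype (Y i)] [∀ i, Fintype (U i)] [∀ i, DecidableEq (Y i)] [∀ i, DecidableEq (U i)]

noncomputable def condPayoff (r : (∀ i, Y i) → (∀ i, U i) → ℝ) (j : ι) (γ : ∀ i, Y i → U i → ℝ)
    (yj : Y j) (uj : U j) : ℝ :=
  ∑ y : ∀ i, Y i, ∑ u : ∀ i, U i,
    if y j = yj ∧ u j = uj then
      r y u * ∏ i ∈ univ.erase j, (γ i (y i) (u i) * (Fintype.card (Y i) : ℝ)⁻¹)
    else 0

theorem condPayoff_eq_prodWeightedSum (r : (∀ i, Y i) → (∀ i, U i) → ℝ) (j : ι)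
    (γ : ∀ i, Y i → U i → ℝ) (yj : Y j) (uj : U j) :
    condPayoff r j γ yj uj =
      prodWeightedSum (fun z => r (fun k => (z k).1) (fun k => (z k).2))
        (update (policyWeight γ) j (Pi.single (yj, uj) 1)) := by
  rw [prodWeightedSum, ← (Equiv.arrowProdEquivProdArrow ι Y U).symm.sum_comp,
    Fintype.sum_prod_type]
  refine sum_congr rfl fun y _ => sum_congr rfl fun u _ => ?_
  rw [← mul_prod_erase univ _ (mem_univ j)]
  have hrest : ∏ k ∈ univ.erase j, update (policyWeight γ) j (Pi.single (yj, uj) 1) k (y k, u k)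
      = ∏ k ∈ univ.erase j, (γ k (y k) (u k) * (Fintype.card (Y k) : ℝ)⁻¹) :=
    prod_congr rfl fun k hk => by rw [update_of_ne (ne_of_mem_erase hk)]; rfl
  simp only [Equiv.arrowProdEquivProdArrow_symm_apply, update_self, Pi.single_apply,
    Prod.mk.injEq, hrest]
  split_ifs <;> ring

omit [∀ i, DecidableEq (Y i)] [∀ i, DecidableEq (U i)] in
theorem update_sub_update_le_sup' [∀ i, Nonempty (Y i)] [∀ i, Nonempty (U i)]
    (r : (∀ i, Y i) → (∀ i, U i) → ℝ) (i : ι) (y : ∀ k, Y k) (u : ∀ k, U k) (v w : U i) :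
    r y (update u i v) - r y (update u i w) ≤
      univ.sup' univ_nonempty (fun p : (∀ k, Y k) × (∀ k, U k) =>
        univ.sup' univ_nonempty (fun v : U i => r p.1 (update p.2 i v)) -
          univ.inf' univ_nonempty (fun v : U i => r p.1 (update p.2 i v))) :=
  le_sup'_of_le _ (mem_univ (y, u))
    (sub_le_sub (le_sup' (fun v => r y (update u i v)) (mem_univ v))
      (inf'_le (fun v => r y (update u i v)) (mem_univ w)))

theorem abs_condPayoff_sub_le [∀ i, Nonempty (Y i)] [∀ i, Nonempty (U i)]
    {r : (∀ i, Y i) → (∀ i, U i) → ℝ} {lam : ι → ℝ}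
    (hosc : ∀ i y u v w, r y (update u i v) - r y (update u i w) ≤ lam i)
    {γ ξ : ∀ i, Y i → U i → ℝ} (hγ : γ ∈ policyProfiles) (hξ : ξ ∈ policyProfiles)
    (j : ι) (yj : Y j) (uj : U j) :
    |condPayoff r j γ yj uj - condPayoff r j ξ yj uj| ≤
      ∑ i ∈ univ.erase j, lam i / 2 * policyL1Dist γ ξ i := by
  have hweight : ∀ θ ∈ policyProfiles, ∀ k,
      update (policyWeight θ) j (Pi.single (yj, uj) 1) k ∈ stdSimplex ℝ (Y k × U k) := by
    intro θ hθ k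
    by_cases hk : k = j
    · subst hk; rw [update_self]; exact single_mem_stdSimplex ℝ _
    · rw [update_of_ne hk]; exact policyWeight_mem_stdSimplex hθ k
  rw [condPayoff_eq_prodWeightedSum, condPayoff_eq_prodWeightedSum]
  refine (abs_prodWeightedSum_sub_le _ (hweight γ hγ) (hweight ξ hξ)
    (fun i => if i = j then 0 else lam i / 2 * policyL1Dist γ ξ i) fun i z => ?_).trans_eq ?_
  · by_cases hij : i = j
    · -- both weights are the point mass at `(yj, uj)`
      subst hij; simp
    · simp only [if_neg hij, update_of_ne hij, ← sum_abs_policyWeight_sub]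
      have hfst : ∀ x : Y i × U i,
          (fun k => (update z i x k).1) = update (fun k => (z k).1) i x.1 :=
        fun x => funext fun k => apply_update (fun _ p => p.1) z i x k
      have hsnd : ∀ x : Y i × U i,
          (fun k => (update z i x k).2) = update (fun k => (z k).2) i x.2 :=
        fun x => funext fun k => apply_update (fun _ p => p.2) z i x k
      refine abs_sum_mul_le_of_fiberwise_sum_eq_zero (fun y v w => ?_) (fun y => ?_)
      · simp only [hfst, hsnd]
        exact hosc i _ _ v w
      · simp only [policyWeight, ← sub_mul, ← sum_mul, sum_sub_distrib, (hγ i y).2, (hξ i y).2,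
          sub_self, zero_mul]
  · simp [sum_ite, filter_ne']

theorem policyL1Dist_bestResponse_le [∀ i, Nonempty (Y i)] [∀ i, Nonempty (U i)]
    {r : (∀ i, Y i) → (∀ i, U i) → ℝ} {lam : ι → ℝ}
    (hosc : ∀ i y u v w, r y (update u i v) - r y (update u i w) ≤ lam i)
    {ρ : ι → ℝ} (hρ : ∀ j, 0 < ρ j) {Ω : ∀ j, (U j → ℝ) → ℝ}
    (hΩ : ∀ j, IsStrongConvexOnStdSimplex (ρ j) (Ω j))
    {B : ∀ j, (∀ i, Y i → U i → ℝ) → Y j → U j → ℝ}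
    (hB : ∀ j γ y, B j γ y ∈ stdSimplex ℝ (U j) ∧
      IsMaxOn (fun δ => ∑ u, condPayoff r j γ y u * δ u - Ω j δ) (stdSimplex ℝ (U j)) (B j γ y))
    {γ ξ : ∀ i, Y i → U i → ℝ} (hγ : γ ∈ policyProfiles) (hξ : ξ ∈ policyProfiles) (j : ι) :
    policyL1Dist (fun i => B i γ) (fun i => B i ξ) j ≤
      (∑ i ∈ univ.erase j, lam i / 2 * policyL1Dist γ ξ i) / ρ j :=
  policyL1Dist_le_of_forall_le fun y => (le_div_iff₀' (hρ j)).2 <|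
    mul_l1_le_of_isMaxOn (hΩ j) (hB j γ y).1 (hB j ξ y).1 (hB j γ y).2 (hB j ξ y).2
      fun u => abs_condPayoff_sub_le hosc hγ hξ j y u

end TeamPayoff

/-- in the regularized team model, if the matrix `P(j,i) = λ_i(r)/(2ρ_j)`
(`i ≠ j`, zero diagonal) has spectral radius `< 1`, then the best response operator
`B(γ) = (B₁(γ^{-1}),…,B_N(γ^{-N}))` has a unique fixed point `γ*` among policy profiles,
and the iterates `γ^{k+1} = B(γ^k)` from any initial policy profile converge to `γ*` in
the `L¹` policy norm. -/
theorem stmt_15 {N : ℕ}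
    {Y U : Fin N → Type*} [∀ i, Fintype (Y i)] [∀ i, Nonempty (Y i)]
    [∀ i, Fintype (U i)] [∀ i, Nonempty (U i)]
    [∀ i, DecidableEq (Y i)] [∀ i, DecidableEq (U i)]
    (r : (∀ i, Y i) → (∀ i, U i) → ℝ)
    (lam : Fin N → ℝ)
    (hlam : ∀ i, lam i =
      Finset.univ.sup' Finset.univ_nonempty
        (fun p : (∀ k, Y k) × (∀ k, U k) =>
          Finset.univ.sup' Finset.univ_nonempty
              (fun v : U i => r p.1 (Function.update p.2 i v))
            - Finset.univ.inf' Finset.univ_nonempty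
              (fun v : U i => r p.1 (Function.update p.2 i v))))
    (G : (j : Fin N) → (∀ i, Y i → U i → ℝ) → Y j → U j → ℝ)
    (hG : ∀ j γ yj uj, G j γ yj uj =
      ∑ y : ∀ i, Y i, ∑ u : ∀ i, U i,
        if y j = yj ∧ u j = uj then
          r y u * ∏ i ∈ Finset.univ.erase j,
            (γ i (y i) (u i) * (Fintype.card (Y i) : ℝ)⁻¹)
        else 0)
    (Ω : (j : Fin N) → (U j → ℝ) → ℝ) (ρ : Fin N → ℝ) (hρ : ∀ j, 0 < ρ j)
    (hΩ : ∀ j (δ ξ : U j → ℝ),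
      ((∀ v, 0 ≤ δ v) ∧ ∑ v, δ v = 1) → ((∀ v, 0 ≤ ξ v) ∧ ∑ v, ξ v = 1) →
      ∀ t : ℝ, 0 ≤ t → t ≤ 1 →
        Ω j (fun v => t * δ v + (1 - t) * ξ v) ≤
          t * Ω j δ + (1 - t) * Ω j ξ
            - ρ j * (t * (1 - t) / 2) * (∑ v, |δ v - ξ v|) ^ 2)
    (B : (j : Fin N) → (∀ i, Y i → U i → ℝ) → Y j → U j → ℝ)
    (hB : ∀ j γ yj, ((∀ v, 0 ≤ B j γ yj v) ∧ ∑ v, B j γ yj v = 1) ∧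
      ∀ δ : U j → ℝ, (∀ v, 0 ≤ δ v) → ∑ v, δ v = 1 →
        ∑ uj, G j γ yj uj * δ uj - Ω j δ ≤
          ∑ uj, G j γ yj uj * B j γ yj uj - Ω j (B j γ yj))
    (P : Matrix (Fin N) (Fin N) ℝ)
    (hPdef : ∀ j i, P j i = if i = j then 0 else lam i / (2 * ρ j))
    (hspec : ∀ μ ∈ spectrum ℂ (P.map (Complex.ofReal ·)), ‖μ‖ < 1) :
    ∃ γstar : ∀ i, Y i → U i → ℝ,
      (∀ i yi, (∀ v, 0 ≤ γstar i yi v) ∧ ∑ v, γstar i yi v = 1) ∧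
      (fun j => B j γstar) = γstar ∧
      (∀ ξ : ∀ i, Y i → U i → ℝ,
        (∀ i yi, (∀ v, 0 ≤ ξ i yi v) ∧ ∑ v, ξ i yi v = 1) →
        (fun j => B j ξ) = ξ → ξ = γstar) ∧
      ∀ γ0 : ∀ i, Y i → U i → ℝ,
        (∀ i yi, (∀ v, 0 ≤ γ0 i yi v) ∧ ∑ v, γ0 i yi v = 1) →
        ∀ j, Tendsto
          (fun k => ∑ yj : Y j, (Fintype.card (Y j) : ℝ)⁻¹ *
            ∑ uj, |(fun γ (j' : Fin N) => B j' γ)^[k] γ0 j yj uj - γstar j yj uj|)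
          atTop (nhds 0) := by
  obtain rfl : G = condPayoff r := by funext j γ yj uj; exact hG j γ yj uj
  set T : (∀ i, Y i → U i → ℝ) → ∀ i, Y i → U i → ℝ := fun γ j => B j γ
  have hosc : ∀ i y u v w, r y (update u i v) - r y (update u i w) ≤ lam i :=
    fun i y u v w => hlam i ▸ update_sub_update_le_sup' r i y u v w
  have hP : ∀ j i, 0 ≤ P j i := by
    intro j i
    have hlam0 : 0 ≤ lam i := by
      obtain ⟨y, u, v⟩ : (∀ k, Y k) × (∀ k, U k) × U i := Classical.arbitrary _
      simpa using hosc i y u v v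
    rw [hPdef]
    split_ifs
    exacts [le_rfl, div_nonneg hlam0 (by linarith [hρ j])]
  have hT : Set.MapsTo T policyProfiles policyProfiles := fun γ _ j y => (hB j γ y).1
  have hstep : ∀ γ ∈ policyProfiles, ∀ ξ ∈ policyProfiles, ∀ j,
      policyL1Dist (T γ) (T ξ) j ≤ (P *ᵥ policyL1Dist γ ξ) j := fun γ hγ ξ hξ j =>
    (policyL1Dist_bestResponse_le hosc hρ (fun j δ hδ ξ hξ => hΩ j δ ξ hδ hξ)
      (fun j γ y => ⟨(hB j γ y).1, isMaxOn_iff.2 fun δ hδ => (hB j γ y).2 δ hδ.1 hδ.2⟩)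
      hγ hξ j).trans_eq (mulVec_apply_of_eq_ite_div hρ hPdef _ j).symm
  have hne : (policyProfiles (Y := Y) (U := U)).Nonempty := ⟨T 0, fun j y => (hB j 0 y).1⟩
  obtain ⟨γstar, hγstar, hfix, hconv⟩ :=
    exists_isFixedPt_tendsto_iterate isClosed_policyProfiles hne hT
    (summable_sum fun j _ => summable_sum fun i _ =>
      ((Matrix.summable_abs_pow_apply hspec j i).mul_left _).mul_right _)
    fun γ hγ ξ hξ k => dist_iterate_le_of_policyL1Dist_le hP hT hstep hγ hξ k
  refine ⟨γstar, hγstar, hfix, fun ξ hξ hξfix => ?_, fun γ0 hγ0 j => ?_⟩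
  · exact tendsto_const_nhds_iff.1 (by simpa only [iterate_fixed (f := T) hξfix] using hconv ξ hξ)
  · exact squeeze_zero (fun _ => policyL1Dist_nonneg _ _ j)
      (fun k => policyL1Dist_le_card_mul_dist _ _ j)
      (by simpa using (tendsto_iff_dist_tendsto_zero.1 (hconv γ0 hγ0)).const_mul _)
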